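/- Let n ≥ 0 and let Ψ be a set-valued sheaf on smooth n-manifolds with a topological enhancement over ℝⁿ. Topologize Ψ(M) for every smooth n-manifold M by the affine-patch construction: choose an open cover of M by affine patches with diffeomorphisms to open subsets of ℝⁿ, transport the given topologies to the patches, and give Ψ(M) the subspace topology of the product over the patches (this is independent of choices). Then for every smooth n-manifold M and every open cover {Nᵢ} of M by arbitrary open subsets, the canonical injection Ψ(M) → ∏ᵢ Ψ(Nᵢ) is a topological embedding whose image is the set of compatible families (sᵢ) with sᵢ|_{Nᵢ ∩ Nⱼ} = sⱼ|_{Nᵢ ∩ Nⱼ}; that is, Ψ(M) is the equalizer in topological spaces of the two restriction maps ∏ᵢ Ψ(Nᵢ) ⇉ ∏_{(i,j)} Ψ(Nᵢ ∩ Nⱼ). (Lemma 3.6 of the paper: Ψ is a sheaf of topological spaces on smooth n-manifolds.) -/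

import Mathlib

open scoped Manifold
open TopologicalSpace Set

noncomputable section

/-- A map `f : N → M` between smooth `n`-manifolds is an *open smooth embedding* if it is
injective and a smooth local diffeomorphism; equivalently, it is a topological open embedding
which is a diffeomorphism onto its open image. -/
def IsOpenSmoothEmbedding (n : ℕ)
    {N : Type} [TopologicalSpace N] [ChartedSpace (EuclideanSpace ℝ (Fin n)) N]
    {M : Type} [TopologicalSpace M] [ChartedSpace (EuclideanSpace ℝ (Fin n)) M]
    (f : N → M) : Prop :=
  Function.Injective f ∧ IsLocalDiffeomorph (𝓡 n) (𝓡 n) (⊤ : ℕ∞) f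

theorem IsOpenSmoothEmbedding.continuous {n : ℕ}
    {N : Type} [TopologicalSpace N] [ChartedSpace (EuclideanSpace ℝ (Fin n)) N]
    {M : Type} [TopologicalSpace M] [ChartedSpace (EuclideanSpace ℝ (Fin n)) M]
    {f : N → M} (hf : IsOpenSmoothEmbedding n f) : Continuous f :=
  hf.2.contMDiff.continuous

/-- A set-valued sheaf `Ψ` on the site of smooth `n`-manifolds (second countable, Hausdorff,
without boundary) and open smooth embeddings, presented in terms of its sections over the open
subsets of each smooth `n`-manifold.  `sect M U` is the set `Ψ(U)` of sections over the open
subset `U ⊆ M`; `res` is restriction to a smaller open subset, `pull` is pullback along an open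
smooth embedding of manifolds, and `pullD` is pullback along a (partial) diffeomorphism between
an open subset of one manifold and an open subset of another.  These operations are functorial
and satisfy the sheaf condition for arbitrary open covers. -/
structure SetSheaf (n : ℕ) : Type 1 where
  sect : ∀ (M : Type) [TopologicalSpace M] [ChartedSpace (EuclideanSpace ℝ (Fin n)) M]
      [IsManifold (𝓡 n) (⊤ : ℕ∞) M] [SecondCountableTopology M] [T2Space M],
      Opens M → Type
  res : ∀ (M : Type) [TopologicalSpace M] [ChartedSpace (EuclideanSpace ℝ (Fin n)) M]
      [IsManifold (𝓡 n) (⊤ : ℕ∞) M] [SecondCountableTopology M] [T2Space M]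
      {U V : Opens M}, V ≤ U → sect M U → sect M V
  res_id : ∀ (M : Type) [TopologicalSpace M] [ChartedSpace (EuclideanSpace ℝ (Fin n)) M]
      [IsManifold (𝓡 n) (⊤ : ℕ∞) M] [SecondCountableTopology M] [T2Space M]
      (U : Opens M) (s : sect M U), res M (le_refl U) s = s
  res_comp : ∀ (M : Type) [TopologicalSpace M] [ChartedSpace (EuclideanSpace ℝ (Fin n)) M]
      [IsManifold (𝓡 n) (⊤ : ℕ∞) M] [SecondCountableTopology M] [T2Space M]
      {U V W : Opens M} (hVU : V ≤ U) (hWV : W ≤ V) (s : sect M U),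
      res M hWV (res M hVU s) = res M (hWV.trans hVU) s
  pull : ∀ (N : Type) [TopologicalSpace N] [ChartedSpace (EuclideanSpace ℝ (Fin n)) N]
      [IsManifold (𝓡 n) (⊤ : ℕ∞) N] [SecondCountableTopology N] [T2Space N]
      (M : Type) [TopologicalSpace M] [ChartedSpace (EuclideanSpace ℝ (Fin n)) M]
      [IsManifold (𝓡 n) (⊤ : ℕ∞) M] [SecondCountableTopology M] [T2Space M]
      (f : N → M) (hf : IsOpenSmoothEmbedding n f) (U : Opens M),
      sect M U → sect N ⟨f ⁻¹' (U : Set M), U.isOpen.preimage hf.continuous⟩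
  pull_id : ∀ (M : Type) [TopologicalSpace M] [ChartedSpace (EuclideanSpace ℝ (Fin n)) M]
      [IsManifold (𝓡 n) (⊤ : ℕ∞) M] [SecondCountableTopology M] [T2Space M]
      (hid : IsOpenSmoothEmbedding n (id : M → M)) (U : Opens M) (s : sect M U),
      pull M M id hid U s = s
  pull_comp : ∀ (P : Type) [TopologicalSpace P] [ChartedSpace (EuclideanSpace ℝ (Fin n)) P]
      [IsManifold (𝓡 n) (⊤ : ℕ∞) P] [SecondCountableTopology P] [T2Space P]
      (N : Type) [TopologicalSpace N] [ChartedSpace (EuclideanSpace ℝ (Fin n)) N]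
      [IsManifold (𝓡 n) (⊤ : ℕ∞) N] [SecondCountableTopology N] [T2Space N]
      (M : Type) [TopologicalSpace M] [ChartedSpace (EuclideanSpace ℝ (Fin n)) M]
      [IsManifold (𝓡 n) (⊤ : ℕ∞) M] [SecondCountableTopology M] [T2Space M]
      (g : P → N) (f : N → M) (hg : IsOpenSmoothEmbedding n g)
      (hf : IsOpenSmoothEmbedding n f) (hfg : IsOpenSmoothEmbedding n (f ∘ g))
      (U : Opens M) (s : sect M U),
      pull P N g hg _ (pull N M f hf U s) = pull P M (f ∘ g) hfg U s
  pull_res : ∀ (N : Type) [TopologicalSpace N] [ChartedSpace (EuclideanSpace ℝ (Fin n)) N]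
      [IsManifold (𝓡 n) (⊤ : ℕ∞) N] [SecondCountableTopology N] [T2Space N]
      (M : Type) [TopologicalSpace M] [ChartedSpace (EuclideanSpace ℝ (Fin n)) M]
      [IsManifold (𝓡 n) (⊤ : ℕ∞) M] [SecondCountableTopology M] [T2Space M]
      (f : N → M) (hf : IsOpenSmoothEmbedding n f) {U V : Opens M} (h : V ≤ U)
      (s : sect M U),
      pull N M f hf V (res M h s)
        = res N (fun _ hx => h hx) (pull N M f hf U s)
  pullD : ∀ (N : Type) [TopologicalSpace N] [ChartedSpace (EuclideanSpace ℝ (Fin n)) N]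
      [IsManifold (𝓡 n) (⊤ : ℕ∞) N] [SecondCountableTopology N] [T2Space N]
      (M : Type) [TopologicalSpace M] [ChartedSpace (EuclideanSpace ℝ (Fin n)) M]
      [IsManifold (𝓡 n) (⊤ : ℕ∞) M] [SecondCountableTopology M] [T2Space M]
      (e : OpenPartialHomeomorph N M),
      ContMDiffOn (𝓡 n) (𝓡 n) (⊤ : ℕ∞) e e.source →
      ContMDiffOn (𝓡 n) (𝓡 n) (⊤ : ℕ∞) e.symm e.target →
      ∀ (V : Opens N) (U : Opens M), (V : Set N) ⊆ e.source → e '' (V : Set N) = (U : Set M) →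
      sect M U → sect N V
  pullD_refl : ∀ (M : Type) [TopologicalSpace M] [ChartedSpace (EuclideanSpace ℝ (Fin n)) M]
      [IsManifold (𝓡 n) (⊤ : ℕ∞) M] [SecondCountableTopology M] [T2Space M]
      (h₁ : ContMDiffOn (𝓡 n) (𝓡 n) (⊤ : ℕ∞) (OpenPartialHomeomorph.refl M) (OpenPartialHomeomorph.refl M).source)
      (h₂ : ContMDiffOn (𝓡 n) (𝓡 n) (⊤ : ℕ∞) (OpenPartialHomeomorph.refl M).symm (OpenPartialHomeomorph.refl M).target)
      (V : Opens M) (s : sect M V),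
      pullD M M (OpenPartialHomeomorph.refl M) h₁ h₂ V V (subset_univ _) (image_id _) s = s
  pullD_res : ∀ (N : Type) [TopologicalSpace N] [ChartedSpace (EuclideanSpace ℝ (Fin n)) N]
      [IsManifold (𝓡 n) (⊤ : ℕ∞) N] [SecondCountableTopology N] [T2Space N]
      (M : Type) [TopologicalSpace M] [ChartedSpace (EuclideanSpace ℝ (Fin n)) M]
      [IsManifold (𝓡 n) (⊤ : ℕ∞) M] [SecondCountableTopology M] [T2Space M]
      (e : OpenPartialHomeomorph N M)
      (h₁ : ContMDiffOn (𝓡 n) (𝓡 n) (⊤ : ℕ∞) e e.source)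
      (h₂ : ContMDiffOn (𝓡 n) (𝓡 n) (⊤ : ℕ∞) e.symm e.target)
      {V' V : Opens N} {U' U : Opens M} (hV : (V : Set N) ⊆ e.source)
      (hV' : (V' : Set N) ⊆ e.source)
      (hU : e '' (V : Set N) = (U : Set M)) (hU' : e '' (V' : Set N) = (U' : Set M))
      (hVV' : V' ≤ V) (hUU' : U' ≤ U) (s : sect M U),
      res N hVV' (pullD N M e h₁ h₂ V U hV hU s)
        = pullD N M e h₁ h₂ V' U' hV' hU' (res M hUU' s)
  pullD_trans : ∀ (P : Type) [TopologicalSpace P] [ChartedSpace (EuclideanSpace ℝ (Fin n)) P]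
      [IsManifold (𝓡 n) (⊤ : ℕ∞) P] [SecondCountableTopology P] [T2Space P]
      (N : Type) [TopologicalSpace N] [ChartedSpace (EuclideanSpace ℝ (Fin n)) N]
      [IsManifold (𝓡 n) (⊤ : ℕ∞) N] [SecondCountableTopology N] [T2Space N]
      (M : Type) [TopologicalSpace M] [ChartedSpace (EuclideanSpace ℝ (Fin n)) M]
      [IsManifold (𝓡 n) (⊤ : ℕ∞) M] [SecondCountableTopology M] [T2Space M]
      (e : OpenPartialHomeomorph P N) (f : OpenPartialHomeomorph N M)
      (he₁ : ContMDiffOn (𝓡 n) (𝓡 n) (⊤ : ℕ∞) e e.source)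
      (he₂ : ContMDiffOn (𝓡 n) (𝓡 n) (⊤ : ℕ∞) e.symm e.target)
      (hf₁ : ContMDiffOn (𝓡 n) (𝓡 n) (⊤ : ℕ∞) f f.source)
      (hf₂ : ContMDiffOn (𝓡 n) (𝓡 n) (⊤ : ℕ∞) f.symm f.target)
      (hef₁ : ContMDiffOn (𝓡 n) (𝓡 n) (⊤ : ℕ∞) (e.trans f) (e.trans f).source)
      (hef₂ : ContMDiffOn (𝓡 n) (𝓡 n) (⊤ : ℕ∞) (e.trans f).symm (e.trans f).target)
      (W : Opens P) (V : Opens N) (U : Opens M)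
      (hW : (W : Set P) ⊆ e.source) (hV : e '' (W : Set P) = (V : Set N))
      (hV' : (V : Set N) ⊆ f.source) (hU : f '' (V : Set N) = (U : Set M))
      (hW' : (W : Set P) ⊆ (e.trans f).source)
      (hU' : (e.trans f) '' (W : Set P) = (U : Set M))
      (s : sect M U),
      pullD P N e he₁ he₂ W V hW hV (pullD N M f hf₁ hf₂ V U hV' hU s)
        = pullD P M (e.trans f) hef₁ hef₂ W U hW' hU' s
  pull_pullD : ∀ (N : Type) [TopologicalSpace N] [ChartedSpace (EuclideanSpace ℝ (Fin n)) N]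
      [IsManifold (𝓡 n) (⊤ : ℕ∞) N] [SecondCountableTopology N] [T2Space N]
      (M : Type) [TopologicalSpace M] [ChartedSpace (EuclideanSpace ℝ (Fin n)) M]
      [IsManifold (𝓡 n) (⊤ : ℕ∞) M] [SecondCountableTopology M] [T2Space M]
      (f : N → M) (hf : IsOpenSmoothEmbedding n f) (e : OpenPartialHomeomorph N M)
      (h₁ : ContMDiffOn (𝓡 n) (𝓡 n) (⊤ : ℕ∞) e e.source)
      (h₂ : ContMDiffOn (𝓡 n) (𝓡 n) (⊤ : ℕ∞) e.symm e.target)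
      (hef : EqOn f e e.source)
      (V : Opens N) (U : Opens M) (hV : (V : Set N) ⊆ e.source)
      (hU : e '' (V : Set N) = (U : Set M)) (s : sect M U),
      pullD N M e h₁ h₂ V U hV hU s
        = res N (fun x hx => by
            show f x ∈ (U : Set M)
            rw [← hU]
            exact ⟨x, hx, (hef (hV hx)).symm⟩)
          (pull N M f hf U s)
  locality : ∀ (M : Type) [TopologicalSpace M] [ChartedSpace (EuclideanSpace ℝ (Fin n)) M]
      [IsManifold (𝓡 n) (⊤ : ℕ∞) M] [SecondCountableTopology M] [T2Space M]
      {ι : Type} (U : ι → Opens M) (s t : sect M (⨆ i, U i)),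
      (∀ i, res M (le_iSup U i) s = res M (le_iSup U i) t) → s = t
  gluing : ∀ (M : Type) [TopologicalSpace M] [ChartedSpace (EuclideanSpace ℝ (Fin n)) M]
      [IsManifold (𝓡 n) (⊤ : ℕ∞) M] [SecondCountableTopology M] [T2Space M]
      {ι : Type} (U : ι → Opens M) (s : ∀ i, sect M (U i)),
      (∀ i j, res M (inf_le_left : U i ⊓ U j ≤ U i) (s i)
        = res M (inf_le_right : U i ⊓ U j ≤ U j) (s j)) →
      ∃ σ : sect M (⨆ i, U i), ∀ i, res M (le_iSup U i) σ = s i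

/-- A topological enhancement of a set-valued sheaf on smooth `n`-manifolds over `ℝⁿ`:
a topology on the set of sections over every open subset of `ℝⁿ` such that (a) restriction to a
smaller open subset is continuous, (b) pullback along every diffeomorphism between open subsets
of `ℝⁿ` is a homeomorphism, and (c) for every open cover the canonical injection into the
product of the spaces of local sections is a topological embedding. -/
structure TopEnhancement (n : ℕ) (Ψ : SetSheaf n) : Type 1 where
  τ : ∀ U : Opens (EuclideanSpace ℝ (Fin n)),
      TopologicalSpace (Ψ.sect (EuclideanSpace ℝ (Fin n)) U)
  continuous_res : ∀ {U V : Opens (EuclideanSpace ℝ (Fin n))} (h : V ≤ U),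
      @Continuous _ _ (τ U) (τ V) (Ψ.res _ h)
  isHomeomorph_pullD :
    ∀ (e : OpenPartialHomeomorph (EuclideanSpace ℝ (Fin n)) (EuclideanSpace ℝ (Fin n)))
      (h₁ : ContMDiffOn (𝓡 n) (𝓡 n) (⊤ : ℕ∞) e e.source)
      (h₂ : ContMDiffOn (𝓡 n) (𝓡 n) (⊤ : ℕ∞) e.symm e.target)
      (V U : Opens (EuclideanSpace ℝ (Fin n)))
      (hV : (V : Set (EuclideanSpace ℝ (Fin n))) ⊆ e.source)
      (hU : e '' (V : Set (EuclideanSpace ℝ (Fin n))) = (U : Set (EuclideanSpace ℝ (Fin n)))),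
      @IsHomeomorph _ _ (τ U) (τ V) (Ψ.pullD _ _ e h₁ h₂ V U hV hU)
  isEmbedding_cover : ∀ {ι : Type} (U : ι → Opens (EuclideanSpace ℝ (Fin n))),
      @Topology.IsEmbedding _ _ (τ (⨆ i, U i)) (@Pi.topologicalSpace ι _ (fun i => τ (U i)))
        (fun s i => Ψ.res _ (le_iSup U i) s)
/-- The affine-patch topology on the set of sections of `Ψ` over an open subset `U` of a smooth
`n`-manifold `M`, relative to a family of smooth diffeomorphisms `e i` from open subsets of `M`
contained in `U` onto open subsets of `ℝⁿ` (the affine patches): each set of sections over a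
patch `(e i).source` is topologised by transporting the given topology on the sections over the
open subset `(e i).target ⊆ ℝⁿ` along the bijection given by pullback along `e i`, and the
sections over `U` get the initial (subspace) topology induced by the canonical injection into
the product of the sections over the patches. -/
def patchTop (n : ℕ) (Ψ : SetSheaf n) (T : TopEnhancement n Ψ)
    (M : Type) [TopologicalSpace M] [ChartedSpace (EuclideanSpace ℝ (Fin n)) M]
    [IsManifold (𝓡 n) (⊤ : ℕ∞) M] [SecondCountableTopology M] [T2Space M]
    (U : Opens M) {ι : Type} (e : ι → OpenPartialHomeomorph M (EuclideanSpace ℝ (Fin n)))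
    (hsm : ∀ i, ContMDiffOn (𝓡 n) (𝓡 n) (⊤ : ℕ∞) (e i) (e i).source)
    (hsm' : ∀ i, ContMDiffOn (𝓡 n) (𝓡 n) (⊤ : ℕ∞) (e i).symm (e i).target)
    (hsub : ∀ i, (e i).source ⊆ (U : Set M)) :
    TopologicalSpace (Ψ.sect M U) :=
  TopologicalSpace.induced
    (fun s i => Ψ.res M
      (show (⟨(e i).source, (e i).open_source⟩ : Opens M) ≤ U from hsub i) s)
    (@Pi.topologicalSpace ι _ (fun i =>
      TopologicalSpace.coinduced
        (Ψ.pullD M (EuclideanSpace ℝ (Fin n)) (e i) (hsm i) (hsm' i)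
          ⟨(e i).source, (e i).open_source⟩ ⟨(e i).target, (e i).open_target⟩
          subset_rfl (e i).image_source_eq_target)
        (T.τ ⟨(e i).target, (e i).open_target⟩)))

/-! The topology on `Ψ(U)` is the coarsest one making every chart reading
`s ↦ (e⁻¹)^* (s|_{e.source})` continuous, for `e` in the chosen family of affine patches. Any other
affine patch `f ⊆ U` is then continuous as well: over `f.source ∩ d.source` the reading through
`f` is the reading through `d` followed by pullback along the transition diffeomorphism
`f⁻¹ ≫ d` between open subsets of `ℝⁿ`, a homeomorphism by (b), and by (c) continuity into
`Ψ(f.target)` may be checked on the cover `{f (f.source ∩ d.source)}_d`. Hence the topology does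
not depend on the patches. Using on `M` the patches of all the `Nᵢ` together, the topology of
`Ψ(M)` is by construction the one induced from `∏ᵢ Ψ(Nᵢ)`; injectivity and the description of
the image are the sheaf axioms. -/

open Topology

namespace OpenPartialHomeomorph

variable {X Y : Type*} [TopologicalSpace X] [TopologicalSpace Y]

def imageOpens (e : OpenPartialHomeomorph X Y) (V : Opens X) (hV : (V : Set X) ⊆ e.source) :
    Opens Y :=
  ⟨e '' V, e.isOpen_image_of_subset_source V.isOpen hV⟩

variable (e f : OpenPartialHomeomorph X Y) {V : Opens X} (hV : (V : Set X) ⊆ e.source)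

theorem imageOpens_le_target : e.imageOpens V hV ≤ ⟨e.target, e.open_target⟩ :=
  (image_mono hV).trans e.image_source_eq_target.subset

theorem imageOpens_subset_symm_source : (e.imageOpens V hV : Set Y) ⊆ e.symm.source :=
  e.imageOpens_le_target hV

theorem symm_image_imageOpens : e.symm '' (e.imageOpens V hV : Set Y) = V :=
  e.symm_image_image_of_subset_source hV

theorem imageOpens_subset_symm_trans_source (hf : (V : Set X) ⊆ f.source) :
    (e.imageOpens V hV : Set Y) ⊆ (e.symm.trans f).source := by
  rintro _ ⟨x, hx, rfl⟩
  exact ⟨e.map_source (hV hx), by simpa [e.left_inv (hV hx)] using hf hx⟩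

theorem symm_trans_image_imageOpens (hf : (V : Set X) ⊆ f.source) :
    (e.symm.trans f) '' (e.imageOpens V hV : Set Y) = f.imageOpens V hf := by
  rw [coe_trans, image_comp, e.symm_image_imageOpens hV]
  rfl

theorem contMDiffOn_trans {n : ℕ} {A B C : Type} [TopologicalSpace A]
    [ChartedSpace (EuclideanSpace ℝ (Fin n)) A] [TopologicalSpace B]
    [ChartedSpace (EuclideanSpace ℝ (Fin n)) B] [TopologicalSpace C]
    [ChartedSpace (EuclideanSpace ℝ (Fin n)) C]
    (e : OpenPartialHomeomorph A B) (f : OpenPartialHomeomorph B C)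
    (he : ContMDiffOn (𝓡 n) (𝓡 n) (⊤ : ℕ∞) e e.source)
    (hf : ContMDiffOn (𝓡 n) (𝓡 n) (⊤ : ℕ∞) f f.source) :
    ContMDiffOn (𝓡 n) (𝓡 n) (⊤ : ℕ∞) (e.trans f) (e.trans f).source :=
  hf.comp (he.mono inter_subset_left) fun _ hx => hx.2

end OpenPartialHomeomorph

open OpenPartialHomeomorph

variable {n : ℕ}

theorem isOpenSmoothEmbedding_id (A : Type) [TopologicalSpace A]
    [ChartedSpace (EuclideanSpace ℝ (Fin n)) A] : IsOpenSmoothEmbedding n (id : A → A) :=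
  ⟨Function.injective_id, by
    simpa using (Diffeomorph.refl (𝓡 n) A ((⊤ : ℕ∞) : WithTop ℕ∞)).isLocalDiffeomorph⟩

theorem TopEnhancement.continuous_of_forall_continuous_res {Ψ : SetSheaf n}
    (T : TopEnhancement n Ψ) {X : Type*} {t : TopologicalSpace X} {ι : Type}
    (W : ι → Opens (EuclideanSpace ℝ (Fin n))) {V : Opens (EuclideanSpace ℝ (Fin n))}
    (hWV : ∀ i, W i ≤ V) (hV : V ≤ ⨆ i, W i) {g : X → Ψ.sect _ V}
    (hg : ∀ i, Continuous[t, T.τ (W i)] (Ψ.res _ (hWV i) ∘ g)) :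
    Continuous[t, T.τ V] g := by
  obtain rfl : ⨆ i, W i = V := le_antisymm (iSup_le hWV) hV
  let := T.τ
  exact (T.isEmbedding_cover W).continuous_iff.2 (continuous_pi hg)

namespace SetSheaf

variable (Ψ : SetSheaf n) (T : TopEnhancement n Ψ)
variable {A : Type} [TopologicalSpace A] [ChartedSpace (EuclideanSpace ℝ (Fin n)) A]
  [IsManifold (𝓡 n) (⊤ : ℕ∞) A] [SecondCountableTopology A] [T2Space A]
variable {B : Type} [TopologicalSpace B] [ChartedSpace (EuclideanSpace ℝ (Fin n)) B]
  [IsManifold (𝓡 n) (⊤ : ℕ∞) B] [SecondCountableTopology B] [T2Space B]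

theorem res_iSup_injective {ι : Type} (N : ι → Opens A) :
    Function.Injective (fun (s : Ψ.sect A (⨆ i, N i)) i => Ψ.res A (le_iSup N i) s) :=
  fun s t hst => Ψ.locality A N s t (congrFun hst)

theorem range_res_iSup {ι : Type} (N : ι → Opens A) :
    range (fun (s : Ψ.sect A (⨆ i, N i)) i => Ψ.res A (le_iSup N i) s)
      = {v | ∀ i j, Ψ.res A (inf_le_left : N i ⊓ N j ≤ N i) (v i)
          = Ψ.res A (inf_le_right : N i ⊓ N j ≤ N j) (v j)} := by
  ext v
  constructor
  · rintro ⟨s, rfl⟩ i j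
    simp only [Ψ.res_comp]
  · intro hv
    obtain ⟨s, hs⟩ := Ψ.gluing A N v hv
    exact ⟨s, funext hs⟩

theorem pullD_eq_self_of_eqOn_id (φ : OpenPartialHomeomorph A A)
    (h₁ : ContMDiffOn (𝓡 n) (𝓡 n) (⊤ : ℕ∞) φ φ.source)
    (h₂ : ContMDiffOn (𝓡 n) (𝓡 n) (⊤ : ℕ∞) φ.symm φ.target)
    (hφ : EqOn id φ φ.source) (V : Opens A) (hV : (V : Set A) ⊆ φ.source)
    (hφV : φ '' (V : Set A) = V) (s : Ψ.sect A V) :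
    Ψ.pullD A A φ h₁ h₂ V V hV hφV s = s := by
  rw [Ψ.pull_pullD A A id (isOpenSmoothEmbedding_id A) φ h₁ h₂ hφ, Ψ.pull_id, Ψ.res_id]

theorem pullD_symm_pullD (e : OpenPartialHomeomorph A B)
    (h₁ : ContMDiffOn (𝓡 n) (𝓡 n) (⊤ : ℕ∞) e e.source)
    (h₂ : ContMDiffOn (𝓡 n) (𝓡 n) (⊤ : ℕ∞) e.symm e.target)
    (V : Opens A) (U : Opens B) (hV : (V : Set A) ⊆ e.source) (hU : e '' (V : Set A) = U)
    (hU' : (U : Set B) ⊆ e.symm.source) (hV' : e.symm '' (U : Set B) = V) (s : Ψ.sect B U) :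
    Ψ.pullD B A e.symm h₂ h₁ U V hU' hV' (Ψ.pullD A B e h₁ h₂ V U hV hU s) = s := by
  have hid : EqOn id (e.symm.trans e) (e.symm.trans e).source := fun x hx =>
    (e.right_inv hx.1).symm
  have hUsrc : (U : Set B) ⊆ (e.symm.trans e).source := fun x hx =>
    ⟨hU' hx, hV (hV' ▸ mem_image_of_mem _ hx)⟩
  have hUU : (e.symm.trans e) '' (U : Set B) = U := by
    rw [(hid.symm.mono hUsrc).image_eq, image_id]
  rw [Ψ.pullD_trans B A B e.symm e h₂ h₁ h₁ h₂ (contMDiffOn_trans e.symm e h₂ h₁)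
    (contMDiffOn_trans e.symm e h₂ h₁) U V U hU' hV' hV hU hUsrc hUU]
  exact Ψ.pullD_eq_self_of_eqOn_id _ _ _ hid U hUsrc hUU s

theorem pullD_pullD_symm (e : OpenPartialHomeomorph A B)
    (h₁ : ContMDiffOn (𝓡 n) (𝓡 n) (⊤ : ℕ∞) e e.source)
    (h₂ : ContMDiffOn (𝓡 n) (𝓡 n) (⊤ : ℕ∞) e.symm e.target)
    (V : Opens A) (U : Opens B) (hV : (V : Set A) ⊆ e.source) (hU : e '' (V : Set A) = U)
    (hU' : (U : Set B) ⊆ e.symm.source) (hV' : e.symm '' (U : Set B) = V) (s : Ψ.sect A V) :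
    Ψ.pullD A B e h₁ h₂ V U hV hU (Ψ.pullD B A e.symm h₂ h₁ U V hU' hV' s) = s :=
  Ψ.pullD_symm_pullD e.symm h₂ h₁ U V hU' hV' hV hU s

def pullDEquiv (e : OpenPartialHomeomorph A B)
    (h₁ : ContMDiffOn (𝓡 n) (𝓡 n) (⊤ : ℕ∞) e e.source)
    (h₂ : ContMDiffOn (𝓡 n) (𝓡 n) (⊤ : ℕ∞) e.symm e.target)
    (V : Opens A) (U : Opens B) (hV : (V : Set A) ⊆ e.source) (hU : e '' (V : Set A) = U)
    (hU' : (U : Set B) ⊆ e.symm.source) (hV' : e.symm '' (U : Set B) = V) :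
    Ψ.sect B U ≃ Ψ.sect A V where
  toFun := Ψ.pullD A B e h₁ h₂ V U hV hU
  invFun := Ψ.pullD B A e.symm h₂ h₁ U V hU' hV'
  left_inv := Ψ.pullD_symm_pullD e h₁ h₂ V U hV hU hU' hV'
  right_inv := Ψ.pullD_pullD_symm e h₁ h₂ V U hV hU hU' hV'

theorem coinduced_pullD (e : OpenPartialHomeomorph A B)
    (h₁ : ContMDiffOn (𝓡 n) (𝓡 n) (⊤ : ℕ∞) e e.source)
    (h₂ : ContMDiffOn (𝓡 n) (𝓡 n) (⊤ : ℕ∞) e.symm e.target)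
    (V : Opens A) (U : Opens B) (hV : (V : Set A) ⊆ e.source) (hU : e '' (V : Set A) = U)
    (hU' : (U : Set B) ⊆ e.symm.source) (hV' : e.symm '' (U : Set B) = V)
    (t : TopologicalSpace (Ψ.sect B U)) :
    t.coinduced (Ψ.pullD A B e h₁ h₂ V U hV hU)
      = t.induced (Ψ.pullD B A e.symm h₂ h₁ U V hU' hV') :=
  (congrFun (Equiv.induced_symm (Ψ.pullDEquiv e h₁ h₂ V U hV hU hU' hV')) t).symm

def inChart (U : Opens A) (e : OpenPartialHomeomorph A B)
    (h₁ : ContMDiffOn (𝓡 n) (𝓡 n) (⊤ : ℕ∞) e e.source)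
    (h₂ : ContMDiffOn (𝓡 n) (𝓡 n) (⊤ : ℕ∞) e.symm e.target)
    (hU : e.source ⊆ (U : Set A)) (s : Ψ.sect A U) : Ψ.sect B ⟨e.target, e.open_target⟩ :=
  Ψ.pullD B A e.symm h₂ h₁ ⟨e.target, e.open_target⟩ ⟨e.source, e.open_source⟩ subset_rfl
    e.symm_image_target_eq_source (Ψ.res A (show ⟨e.source, e.open_source⟩ ≤ U from hU) s)

theorem inChart_res {U U' : Opens A} (hUU' : U ≤ U') (e : OpenPartialHomeomorph A B)
    (h₁ : ContMDiffOn (𝓡 n) (𝓡 n) (⊤ : ℕ∞) e e.source)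
    (h₂ : ContMDiffOn (𝓡 n) (𝓡 n) (⊤ : ℕ∞) e.symm e.target)
    (hU : e.source ⊆ (U : Set A)) (s : Ψ.sect A U') :
    Ψ.inChart U e h₁ h₂ hU (Ψ.res A hUU' s) = Ψ.inChart U' e h₁ h₂ (hU.trans hUU') s := by
  rw [inChart, inChart, Ψ.res_comp]

/- The next two proofs are terms rather than `rw` chains: `pullD e.symm` expects smoothness on
`e.symm.source`, which is `e.target` only up to unfolding `symm`, and `rw` rejects such motives. -/

theorem res_inChart {U V : Opens A} (hVU : V ≤ U) (e : OpenPartialHomeomorph A B)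
    (h₁ : ContMDiffOn (𝓡 n) (𝓡 n) (⊤ : ℕ∞) e e.source)
    (h₂ : ContMDiffOn (𝓡 n) (𝓡 n) (⊤ : ℕ∞) e.symm e.target)
    (hU : e.source ⊆ (U : Set A)) (hV : (V : Set A) ⊆ e.source) (s : Ψ.sect A U) :
    Ψ.res B (e.imageOpens_le_target hV) (Ψ.inChart U e h₁ h₂ hU s)
      = Ψ.pullD B A e.symm h₂ h₁ (e.imageOpens V hV) V (e.imageOpens_subset_symm_source hV)
          (e.symm_image_imageOpens hV) (Ψ.res A hVU s) :=
  (Ψ.pullD_res B A e.symm h₂ h₁ subset_rfl _ e.symm_image_target_eq_source _ _ hV _).trans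
    (congrArg (Ψ.pullD B A e.symm h₂ h₁ _ _ _ _) (Ψ.res_comp A _ _ s))

theorem pullD_symm_eq_pullD_symm_trans (f d : OpenPartialHomeomorph A B)
    (hf₁ : ContMDiffOn (𝓡 n) (𝓡 n) (⊤ : ℕ∞) f f.source)
    (hf₂ : ContMDiffOn (𝓡 n) (𝓡 n) (⊤ : ℕ∞) f.symm f.target)
    (hd₁ : ContMDiffOn (𝓡 n) (𝓡 n) (⊤ : ℕ∞) d d.source)
    (hd₂ : ContMDiffOn (𝓡 n) (𝓡 n) (⊤ : ℕ∞) d.symm d.target)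
    (V : Opens A) (hf : (V : Set A) ⊆ f.source) (hd : (V : Set A) ⊆ d.source)
    (s : Ψ.sect A V) :
    Ψ.pullD B A f.symm hf₂ hf₁ (f.imageOpens V hf) V (f.imageOpens_subset_symm_source hf)
        (f.symm_image_imageOpens hf) s
      = Ψ.pullD B B (f.symm.trans d) (contMDiffOn_trans f.symm d hf₂ hd₁)
          (contMDiffOn_trans d.symm f hd₂ hf₁) (f.imageOpens V hf) (d.imageOpens V hd)
          (f.imageOpens_subset_symm_trans_source d hf hd) (f.symm_trans_image_imageOpens d hf hd)
          (Ψ.pullD B A d.symm hd₂ hd₁ (d.imageOpens V hd) V (d.imageOpens_subset_symm_source hd)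
            (d.symm_image_imageOpens hd) s) :=
  (congrArg (Ψ.pullD B A f.symm hf₂ hf₁ _ _ _ _)
    (Ψ.pullD_pullD_symm d hd₁ hd₂ V (d.imageOpens V hd) hd rfl _ _ s)).symm.trans
    (Ψ.pullD_trans B A B f.symm d hf₂ hf₁ hd₁ hd₂ _ _ _ _ _ _ _ _ _ _ _ _)

theorem patchTop_eq_iInf_induced (U : Opens A) {ι : Type}
    (e : ι → OpenPartialHomeomorph A (EuclideanSpace ℝ (Fin n)))
    (hsm : ∀ i, ContMDiffOn (𝓡 n) (𝓡 n) (⊤ : ℕ∞) (e i) (e i).source)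
    (hsm' : ∀ i, ContMDiffOn (𝓡 n) (𝓡 n) (⊤ : ℕ∞) (e i).symm (e i).target)
    (hsub : ∀ i, (e i).source ⊆ (U : Set A)) :
    patchTop n Ψ T A U e hsm hsm' hsub
      = ⨅ i, (T.τ ⟨(e i).target, (e i).open_target⟩).induced
          (Ψ.inChart U (e i) (hsm i) (hsm' i) (hsub i)) := by
  refine induced_iInf.trans (iInf_congr fun i => ?_)
  dsimp only
  rw [induced_compose, coinduced_pullD Ψ (e i) (hsm i) (hsm' i) _ _ _ _ subset_rfl
    (e i).symm_image_target_eq_source, induced_compose]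
  rfl

theorem continuous_inChart_patchTop (U : Opens A) {κ : Type}
    (d : κ → OpenPartialHomeomorph A (EuclideanSpace ℝ (Fin n)))
    (hsm : ∀ j, ContMDiffOn (𝓡 n) (𝓡 n) (⊤ : ℕ∞) (d j) (d j).source)
    (hsm' : ∀ j, ContMDiffOn (𝓡 n) (𝓡 n) (⊤ : ℕ∞) (d j).symm (d j).target)
    (hsub : ∀ j, (d j).source ⊆ (U : Set A)) (hcov : ⋃ j, (d j).source = U)
    (f : OpenPartialHomeomorph A (EuclideanSpace ℝ (Fin n)))
    (hf₁ : ContMDiffOn (𝓡 n) (𝓡 n) (⊤ : ℕ∞) f f.source)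
    (hf₂ : ContMDiffOn (𝓡 n) (𝓡 n) (⊤ : ℕ∞) f.symm f.target) (hfU : f.source ⊆ (U : Set A)) :
    Continuous[patchTop n Ψ T A U d hsm hsm' hsub, T.τ ⟨f.target, f.open_target⟩]
      (Ψ.inChart U f hf₁ hf₂ hfU) := by
  let P : κ → Opens A := fun j =>
    ⟨f.source ∩ (d j).source, f.open_source.inter (d j).open_source⟩
  have hPf : ∀ j, (P j : Set A) ⊆ f.source := fun j => inter_subset_left
  have hPd : ∀ j, (P j : Set A) ⊆ (d j).source := fun j => inter_subset_right
  have hPU : ∀ j, P j ≤ U := fun j => (hPf j).trans hfU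
  refine T.continuous_of_forall_continuous_res (fun j => f.imageOpens (P j) (hPf j))
    (fun j => f.imageOpens_le_target (hPf j)) ?_ fun j => ?_
  · intro x hx
    obtain ⟨j, hj⟩ := mem_iUnion.1 (hcov ▸ hfU (f.map_target hx) : f.symm x ∈ ⋃ j, (d j).source)
    exact Opens.mem_iSup.2 ⟨j, f.symm x, ⟨f.map_target hx, hj⟩, f.right_inv hx⟩
  · have hd : Continuous[patchTop n Ψ T A U d hsm hsm' hsub,
        T.τ ⟨(d j).target, (d j).open_target⟩] (Ψ.inChart U (d j) (hsm j) (hsm' j) (hsub j)) :=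
      continuous_iff_le_induced.2 ((Ψ.patchTop_eq_iInf_induced T U d hsm hsm' hsub).le.trans
        (iInf_le _ j))
    have htransition : Ψ.res _ (f.imageOpens_le_target (hPf j)) ∘ Ψ.inChart U f hf₁ hf₂ hfU
        = Ψ.pullD _ _ (f.symm.trans (d j)) (contMDiffOn_trans f.symm (d j) hf₂ (hsm j))
            (contMDiffOn_trans (d j).symm f (hsm' j) hf₁) _ _
            (f.imageOpens_subset_symm_trans_source (d j) (hPf j) (hPd j))
            (f.symm_trans_image_imageOpens (d j) (hPf j) (hPd j))
          ∘ Ψ.res _ ((d j).imageOpens_le_target (hPd j))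
          ∘ Ψ.inChart U (d j) (hsm j) (hsm' j) (hsub j) := by
      funext s
      simp only [Function.comp_apply, Ψ.res_inChart (hPU j)]
      exact Ψ.pullD_symm_eq_pullD_symm_trans f (d j) hf₁ hf₂ (hsm j) (hsm' j) (P j) _ _ _
    rw [htransition]
    let := T.τ
    let := patchTop n Ψ T A U d hsm hsm' hsub
    exact (T.isHomeomorph_pullD _ _ _ _ _ _ _).continuous.comp ((T.continuous_res _).comp hd)

theorem patchTop_le_patchTop (U : Opens A) {κ₁ κ₂ : Type}
    (e : κ₁ → OpenPartialHomeomorph A (EuclideanSpace ℝ (Fin n)))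
    (he₁ : ∀ i, ContMDiffOn (𝓡 n) (𝓡 n) (⊤ : ℕ∞) (e i) (e i).source)
    (he₂ : ∀ i, ContMDiffOn (𝓡 n) (𝓡 n) (⊤ : ℕ∞) (e i).symm (e i).target)
    (heU : ∀ i, (e i).source ⊆ (U : Set A))
    (d : κ₂ → OpenPartialHomeomorph A (EuclideanSpace ℝ (Fin n)))
    (hd₁ : ∀ j, ContMDiffOn (𝓡 n) (𝓡 n) (⊤ : ℕ∞) (d j) (d j).source)
    (hd₂ : ∀ j, ContMDiffOn (𝓡 n) (𝓡 n) (⊤ : ℕ∞) (d j).symm (d j).target)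
    (hdU : ∀ j, (d j).source ⊆ (U : Set A)) (hd : ⋃ j, (d j).source = U) :
    patchTop n Ψ T A U d hd₁ hd₂ hdU ≤ patchTop n Ψ T A U e he₁ he₂ heU := by
  rw [Ψ.patchTop_eq_iInf_induced T U e]
  exact le_iInf fun i => continuous_iff_le_induced.1
    (Ψ.continuous_inChart_patchTop T U d hd₁ hd₂ hdU hd (e i) (he₁ i) (he₂ i) (heU i))

/-- Lemma 3.4 of the paper. -/
theorem patchTop_congr (U : Opens A) {κ₁ κ₂ : Type}
    (e : κ₁ → OpenPartialHomeomorph A (EuclideanSpace ℝ (Fin n)))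
    (he₁ : ∀ i, ContMDiffOn (𝓡 n) (𝓡 n) (⊤ : ℕ∞) (e i) (e i).source)
    (he₂ : ∀ i, ContMDiffOn (𝓡 n) (𝓡 n) (⊤ : ℕ∞) (e i).symm (e i).target)
    (heU : ∀ i, (e i).source ⊆ (U : Set A)) (he : ⋃ i, (e i).source = U)
    (d : κ₂ → OpenPartialHomeomorph A (EuclideanSpace ℝ (Fin n)))
    (hd₁ : ∀ j, ContMDiffOn (𝓡 n) (𝓡 n) (⊤ : ℕ∞) (d j) (d j).source)
    (hd₂ : ∀ j, ContMDiffOn (𝓡 n) (𝓡 n) (⊤ : ℕ∞) (d j).symm (d j).target)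
    (hdU : ∀ j, (d j).source ⊆ (U : Set A)) (hd : ⋃ j, (d j).source = U) :
    patchTop n Ψ T A U e he₁ he₂ heU = patchTop n Ψ T A U d hd₁ hd₂ hdU :=
  le_antisymm (Ψ.patchTop_le_patchTop T U d hd₁ hd₂ hdU e he₁ he₂ heU he)
    (Ψ.patchTop_le_patchTop T U e he₁ he₂ heU d hd₁ hd₂ hdU hd)

theorem patchTop_sigma {ι : Type} (N : ι → Opens A) {κ : ι → Type}
    (d : ∀ i, κ i → OpenPartialHomeomorph A (EuclideanSpace ℝ (Fin n)))
    (hd₁ : ∀ i j, ContMDiffOn (𝓡 n) (𝓡 n) (⊤ : ℕ∞) (d i j) (d i j).source)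
    (hd₂ : ∀ i j, ContMDiffOn (𝓡 n) (𝓡 n) (⊤ : ℕ∞) (d i j).symm (d i j).target)
    (hdN : ∀ i j, (d i j).source ⊆ (N i : Set A)) :
    patchTop n Ψ T A (⨆ i, N i) (fun p : Σ i, κ i => d p.1 p.2) (fun p => hd₁ p.1 p.2)
        (fun p => hd₂ p.1 p.2)
        (fun p => (hdN p.1 p.2).trans (SetLike.coe_subset_coe.2 (le_iSup N p.1)))
      = (Pi.topologicalSpace (Y := fun i => Ψ.sect A (N i))
          (t₂ := fun i => patchTop n Ψ T A (N i) (d i) (hd₁ i) (hd₂ i) (hdN i))).induced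
          fun s i => Ψ.res A (le_iSup N i) s := by
  rw [patchTop_eq_iInf_induced, iInf_sigma]
  refine (induced_iInf.trans (iInf_congr fun i => ?_)).symm
  dsimp only
  rw [induced_compose, patchTop_eq_iInf_induced, induced_iInf]
  refine iInf_congr fun j => ?_
  rw [induced_compose]
  exact congrArg (fun F => TopologicalSpace.induced F _)
    (funext fun s => Ψ.inChart_res _ _ _ _ _ s)

theorem eqRec_patchTop {κ : Type} (e : κ → OpenPartialHomeomorph A (EuclideanSpace ℝ (Fin n)))
    (he₁ : ∀ i, ContMDiffOn (𝓡 n) (𝓡 n) (⊤ : ℕ∞) (e i) (e i).source)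
    (he₂ : ∀ i, ContMDiffOn (𝓡 n) (𝓡 n) (⊤ : ℕ∞) (e i).symm (e i).target)
    {U U' : Opens A} (hU : U = U') (heU : ∀ i, (e i).source ⊆ (U : Set A))
    (heU' : ∀ i, (e i).source ⊆ (U' : Set A)) :
    (hU ▸ patchTop n Ψ T A U' e he₁ he₂ heU' : TopologicalSpace (Ψ.sect A U))
      = patchTop n Ψ T A U e he₁ he₂ heU := by
  subst hU
  rfl

end SetSheaf

theorem sheaf_of_topological_spaces_general (n : ℕ) (Ψ : SetSheaf n) (T : TopEnhancement n Ψ)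
    (M : Type) [TopologicalSpace M] [ChartedSpace (EuclideanSpace ℝ (Fin n)) M]
    [IsManifold (𝓡 n) (⊤ : ℕ∞) M] [SecondCountableTopology M] [T2Space M]
    {ι : Type} (N : ι → Opens M) (hcov : (⨆ i, N i) = ⊤)
    -- affine-patch data on `M` itself:
    {κ : Type} (e : κ → OpenPartialHomeomorph M (EuclideanSpace ℝ (Fin n)))
    (hsmₑ : ∀ i, ContMDiffOn (𝓡 n) (𝓡 n) (⊤ : ℕ∞) (e i) (e i).source)
    (hsmₑ' : ∀ i, ContMDiffOn (𝓡 n) (𝓡 n) (⊤ : ℕ∞) (e i).symm (e i).target)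
    (hcovₑ : (⋃ i, (e i).source) = univ)
    -- affine-patch data on each open set `N i` of the cover:
    {κ' : ι → Type} (d : ∀ i, κ' i → OpenPartialHomeomorph M (EuclideanSpace ℝ (Fin n)))
    (hsm_d : ∀ i j, ContMDiffOn (𝓡 n) (𝓡 n) (⊤ : ℕ∞) (d i j) (d i j).source)
    (hsm_d' : ∀ i j, ContMDiffOn (𝓡 n) (𝓡 n) (⊤ : ℕ∞) (d i j).symm (d i j).target)
    (hsub_d : ∀ i j, (d i j).source ⊆ (N i : Set M))
    (hcov_d : ∀ i, (⋃ j, (d i j).source) = (N i : Set M))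
    -- affine-patch data on each intersection `N i ⊓ N j`:
    {κ'' : ι → ι → Type}
    (g : ∀ i j, κ'' i j → OpenPartialHomeomorph M (EuclideanSpace ℝ (Fin n)))
    (hsm_g : ∀ i j k, ContMDiffOn (𝓡 n) (𝓡 n) (⊤ : ℕ∞) (g i j k) (g i j k).source)
    (hsm_g' : ∀ i j k, ContMDiffOn (𝓡 n) (𝓡 n) (⊤ : ℕ∞) (g i j k).symm (g i j k).target)
    (hsub_g : ∀ i j k, (g i j k).source ⊆ (N i ⊓ N j : Opens M)) :
    -- the topology on `Ψ(M)`; by `hcov` the top open set is the supremum of the cover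
    letI τM : TopologicalSpace (Ψ.sect M (⨆ i, N i)) :=
      hcov ▸ patchTop n Ψ T M ⊤ e hsmₑ hsmₑ' (fun _ => subset_univ _)
    -- the topologies on the `Ψ(Nᵢ)` and the `Ψ(Nᵢ ∩ Nⱼ)`:
    letI τN : ∀ i, TopologicalSpace (Ψ.sect M (N i)) :=
      fun i => patchTop n Ψ T M (N i) (d i) (hsm_d i) (hsm_d' i) (hsub_d i)
    letI τNN : ∀ i j, TopologicalSpace (Ψ.sect M (N i ⊓ N j)) :=
      fun i j => patchTop n Ψ T M (N i ⊓ N j) (g i j) (hsm_g i j) (hsm_g' i j) (hsub_g i j)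
    @Topology.IsEmbedding _ _ τM (@Pi.topologicalSpace ι _ τN)
        (fun s i => Ψ.res M (le_iSup N i) s) ∧
      Set.range (fun (s : Ψ.sect M (⨆ i, N i)) i => Ψ.res M (le_iSup N i) s)
        = {v : ∀ i, Ψ.sect M (N i) |
            ∀ i j, Ψ.res M (inf_le_left : N i ⊓ N j ≤ N i) (v i)
              = Ψ.res M (inf_le_right : N i ⊓ N j ≤ N j) (v j)} := by
  have hsubₑ : ∀ k, (e k).source ⊆ ((⨆ i, N i : Opens M) : Set M) := fun _ =>
    hcov ▸ subset_univ _
  have hcovₑ' : ⋃ k, (e k).source = ((⨆ i, N i : Opens M) : Set M) := by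
    rw [hcov]
    exact hcovₑ
  have hcov_d' : ⋃ p : Σ i, κ' i, (d p.1 p.2).source = ((⨆ i, N i : Opens M) : Set M) := by
    rw [iUnion_sigma, Opens.coe_iSup]
    exact iUnion_congr hcov_d
  have hτM := (Ψ.patchTop_congr T _ e hsmₑ hsmₑ' hsubₑ hcovₑ' _ _ _ _ hcov_d').trans
    (Ψ.patchTop_sigma T N d hsm_d hsm_d' hsub_d)
  rw [Ψ.eqRec_patchTop T e hsmₑ hsmₑ' hcov hsubₑ fun _ => subset_univ _, hτM]
  exact ⟨Topology.IsEmbedding.induced (t := _) (Ψ.res_iSup_injective N), Ψ.range_res_iSup N⟩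

/-- **Lemma 3.6** (`Ψ` is a sheaf of topological spaces on smooth `n`-manifolds).
Topologise the sets of sections of `Ψ` by the affine-patch construction (for arbitrary choices
of affine-patch data; by Lemma 3.4 the topologies do not depend on these choices).  Then for
every smooth `n`-manifold `M` and every open cover `{Nᵢ}` of `M`, the canonical injection
`Ψ(M) → ∏ᵢ Ψ(Nᵢ)` is a topological embedding whose image is exactly the set of compatible
families, i.e. the families `(sᵢ)` with `sᵢ|_{Nᵢ ∩ Nⱼ} = sⱼ|_{Nᵢ ∩ Nⱼ}` for all `i, j`; that is,
`Ψ(M)` is the equaliser, in topological spaces, of the two restriction maps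
`∏ᵢ Ψ(Nᵢ) ⇉ ∏_{(i,j)} Ψ(Nᵢ ∩ Nⱼ)`. -/
theorem sheaf_of_topological_spaces (n : ℕ) (Ψ : SetSheaf n) (T : TopEnhancement n Ψ)
    (M : Type) [TopologicalSpace M] [ChartedSpace (EuclideanSpace ℝ (Fin n)) M]
    [IsManifold (𝓡 n) (⊤ : ℕ∞) M] [SecondCountableTopology M] [T2Space M]
    {ι : Type} (N : ι → Opens M) (hcov : (⨆ i, N i) = ⊤)
    -- affine-patch data on `M` itself:
    {κ : Type} (e : κ → OpenPartialHomeomorph M (EuclideanSpace ℝ (Fin n)))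
    (hsmₑ : ∀ i, ContMDiffOn (𝓡 n) (𝓡 n) (⊤ : ℕ∞) (e i) (e i).source)
    (hsmₑ' : ∀ i, ContMDiffOn (𝓡 n) (𝓡 n) (⊤ : ℕ∞) (e i).symm (e i).target)
    (hcovₑ : (⋃ i, (e i).source) = univ)
    -- affine-patch data on each open set `N i` of the cover:
    {κ' : ι → Type} (d : ∀ i, κ' i → OpenPartialHomeomorph M (EuclideanSpace ℝ (Fin n)))
    (hsm_d : ∀ i j, ContMDiffOn (𝓡 n) (𝓡 n) (⊤ : ℕ∞) (d i j) (d i j).source)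
    (hsm_d' : ∀ i j, ContMDiffOn (𝓡 n) (𝓡 n) (⊤ : ℕ∞) (d i j).symm (d i j).target)
    (hsub_d : ∀ i j, (d i j).source ⊆ (N i : Set M))
    (hcov_d : ∀ i, (⋃ j, (d i j).source) = (N i : Set M))
    -- affine-patch data on each intersection `N i ⊓ N j`:
    {κ'' : ι → ι → Type}
    (g : ∀ i j, κ'' i j → OpenPartialHomeomorph M (EuclideanSpace ℝ (Fin n)))
    (hsm_g : ∀ i j k, ContMDiffOn (𝓡 n) (𝓡 n) (⊤ : ℕ∞) (g i j k) (g i j k).source)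
    (hsm_g' : ∀ i j k, ContMDiffOn (𝓡 n) (𝓡 n) (⊤ : ℕ∞) (g i j k).symm (g i j k).target)
    (hsub_g : ∀ i j k, (g i j k).source ⊆ (N i ⊓ N j : Opens M))
    (hcov_g : ∀ i j, (⋃ k, (g i j k).source) = (N i ⊓ N j : Opens M)) :
    -- the topology on `Ψ(M)`; by `hcov` the top open set is the supremum of the cover
    letI τM : TopologicalSpace (Ψ.sect M (⨆ i, N i)) :=
      hcov ▸ patchTop n Ψ T M ⊤ e hsmₑ hsmₑ' (fun _ => subset_univ _)
    -- the topologies on the `Ψ(Nᵢ)` and the `Ψ(Nᵢ ∩ Nⱼ)`: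
    letI τN : ∀ i, TopologicalSpace (Ψ.sect M (N i)) :=
      fun i => patchTop n Ψ T M (N i) (d i) (hsm_d i) (hsm_d' i) (hsub_d i)
    letI τNN : ∀ i j, TopologicalSpace (Ψ.sect M (N i ⊓ N j)) :=
      fun i j => patchTop n Ψ T M (N i ⊓ N j) (g i j) (hsm_g i j) (hsm_g' i j) (hsub_g i j)
    @Topology.IsEmbedding _ _ τM (@Pi.topologicalSpace ι _ τN)
        (fun s i => Ψ.res M (le_iSup N i) s) ∧
      Set.range (fun (s : Ψ.sect M (⨆ i, N i)) i => Ψ.res M (le_iSup N i) s)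
        = {v : ∀ i, Ψ.sect M (N i) |
            ∀ i j, Ψ.res M (inf_le_left : N i ⊓ N j ≤ N i) (v i)
              = Ψ.res M (inf_le_right : N i ⊓ N j ≤ N j) (v j)} :=
  sheaf_of_topological_spaces_general n Ψ T M N hcov e hsmₑ hsmₑ' hcovₑ d hsm_d hsm_d' hsub_d hcov_d
    g hsm_g hsm_g' hsub_g
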